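/- arXiv:2309.02660 — 5 statements merged into one kernel-verified Lean document; each statement's English description precedes it below -/
import Mathlib

section
/- Let F_i : ℝ^n → ℝ (i = 1,…,N) be differentiable at points x_i⁺ ∈ ℝ^n, let σ_i ∈ ℝ, let y⁺ ∈ ℝ^n, and set Δx̃_i := y⁺ − x_i⁺. Define Φ(x_1,…,x_N) = Σ_{i=1}^N F_i(x_i) + Σ_{i=1}^N σ_i ‖x_i − y⁺‖₁. Then the one-sided directional derivative of Φ at (x_1⁺,…,x_N⁺) in the direction (Δx̃_1,…,Δx̃_N) exists and equals Σ_{i=1}^N ⟪∇F_i(x_i⁺), Δx̃_i⟫ − Σ_{i=1}^N σ_i ‖Δx̃_i‖₁; that is, lim_{t→0⁺} (Φ(x⁺ + t·Δx̃) − Φ(x⁺))/t = Σ_i ⟪∇F_i(x_i⁺), Δx̃_i⟫ − Σ_i σ_i ‖Δx̃_i‖₁. -/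
open Filter Topology

/-- The ℓ₁ norm on ℝⁿ: `‖v‖₁ = ∑ⱼ |vⱼ|`. -/
noncomputable def l1norm {n : ℕ} (v : EuclideanSpace ℝ (Fin n)) : ℝ := ∑ j, |v j|

/-! Along the segment from `x` towards `y` the penalty `‖x - y‖₁` decreases linearly, so its
one-sided difference quotient is eventually the constant `-‖y - x‖₁`; the smooth part
contributes the usual directional derivative `⟪∇F(x), y - x⟫`. -/

theorem HasGradientAt.tendsto_slope_zero_right {E : Type*} [NormedAddCommGroup E]
    [InnerProductSpace ℝ E] [CompleteSpace E] {f : E → ℝ} {g x : E}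
    (hf : HasGradientAt f g x) (v : E) :
    Tendsto (fun t : ℝ => (f (x + t • v) - f x) / t) (𝓝[>] 0) (𝓝 (inner ℝ g v)) := by
  simpa only [smul_eq_mul, inv_mul_eq_div, InnerProductSpace.toDual_apply_apply] using
    (hf.hasFDerivAt.hasLineDerivAt v).tendsto_slope_zero_right

section L1Norm

variable {n : ℕ}

theorem l1norm_smul (c : ℝ) (v : EuclideanSpace ℝ (Fin n)) :
    l1norm (c • v) = |c| * l1norm v := by
  simp only [l1norm, Finset.mul_sum, PiLp.smul_apply, smul_eq_mul, abs_mul]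

theorem l1norm_sub_comm (x y : EuclideanSpace ℝ (Fin n)) : l1norm (x - y) = l1norm (y - x) := by
  simp only [l1norm, PiLp.sub_apply, abs_sub_comm]

theorem l1norm_add_smul_sub_sub_of_le_one (x y : EuclideanSpace ℝ (Fin n)) {t : ℝ}
    (ht : t ≤ 1) : l1norm (x + t • (y - x) - y) = (1 - t) * l1norm (y - x) := by
  have hsegment : x + t • (y - x) - y = (t - 1) • (y - x) := by module
  rw [hsegment, l1norm_smul, abs_of_nonpos (by linarith), neg_sub]

theorem tendsto_l1norm_slope_along_segment (x y : EuclideanSpace ℝ (Fin n)) :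
    Tendsto (fun t : ℝ => (l1norm (x + t • (y - x) - y) - l1norm (x - y)) / t) (𝓝[>] 0)
      (𝓝 (-l1norm (y - x))) := by
  refine tendsto_const_nhds.congr' ?_
  filter_upwards [Ioo_mem_nhdsGT (zero_lt_one' ℝ)] with t ⟨ht0, ht1⟩
  rw [l1norm_add_smul_sub_sub_of_le_one x y ht1.le, l1norm_sub_comm x y]
  field_simp
  ring

end L1Norm

/-- Lemma 1: directional derivative of the L1 merit function along the consensus direction. -/
theorem merit_directional_derivative {n N : ℕ}
    (F : Fin N → EuclideanSpace ℝ (Fin n) → ℝ)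
    (g xp : Fin N → EuclideanSpace ℝ (Fin n))
    (σ : Fin N → ℝ) (yp : EuclideanSpace ℝ (Fin n))
    (hF : ∀ i, HasGradientAt (F i) (g i) (xp i))
    (Δ : Fin N → EuclideanSpace ℝ (Fin n))
    (hΔ : ∀ i, Δ i = yp - xp i)
    (Φ : (Fin N → EuclideanSpace ℝ (Fin n)) → ℝ)
    (hΦ : ∀ x, Φ x = ∑ i, F i (x i) + ∑ i, σ i * l1norm (x i - yp)) :
    Tendsto (fun t : ℝ => (Φ (fun i => xp i + t • Δ i) - Φ xp) / t) (𝓝[>] 0)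
      (𝓝 (∑ i, (inner ℝ (g i) (Δ i) : ℝ) - ∑ i, σ i * l1norm (Δ i))) := by
  simp only [hΔ]
  have hsplit : (fun t : ℝ => (Φ (fun i => xp i + t • (yp - xp i)) - Φ xp) / t) = fun t =>
      ∑ i, (F i (xp i + t • (yp - xp i)) - F i (xp i)) / t +
        ∑ i, σ i * ((l1norm (xp i + t • (yp - xp i) - yp) - l1norm (xp i - yp)) / t) := by
    funext t
    rw [hΦ, hΦ, add_sub_add_comm, ← Finset.sum_sub_distrib, ← Finset.sum_sub_distrib, add_div,
      Finset.sum_div, Finset.sum_div]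
    simp only [← mul_sub, mul_div_assoc]
  have hsmooth := tendsto_finsetSum Finset.univ fun i _ =>
    (hF i).tendsto_slope_zero_right (yp - xp i)
  have hpenalty := tendsto_finsetSum Finset.univ fun i _ =>
    (tendsto_l1norm_slope_along_segment (xp i) yp).const_mul (σ i)
  rw [hsplit]
  simpa only [mul_neg, Finset.sum_neg_distrib, ← sub_eq_add_neg] using hsmooth.add hpenalty
end

section
/- Let F_i : ℝ^n → ℝ (i = 1,…,N) be differentiable at a point y ∈ ℝ^n, let B_i be symmetric positive definite n×n real matrices, let σ_i ≥ 0, and let λ_i, Δx_i ∈ ℝ^n satisfy the first-order optimality condition ∇F_i(y) + λ_i + B_i Δx_i = 0 for every i. If Σ_{i=1}^N ⟪λ_i, Δx_i⟫ + Σ_{i=1}^N ⟪Δx_i, B_i Δx_i⟫ > Σ_{i=1}^N σ_i ‖Δx_i‖₁, then the one-sided directional derivative of the merit function Φ(x_1,…,x_N) = Σ_i F_i(x_i) + Σ_i σ_i ‖x_i − y‖₁ at the point (y,…,y) in the direction (Δx_1,…,Δx_N) is strictly negative; equivalently, Σ_{i=1}^N ⟪∇F_i(y), Δx_i⟫ +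 Σ_{i=1}^N σ_i ‖Δx_i‖₁ < 0. -/
open Finset RealInnerProductSpace

section

variable {E : Type*} [NormedAddCommGroup E] [InnerProductSpace ℝ E]

lemma inner_eq_neg_sub_of_add_add_eq_zero {g l v : E} (h : g + l + v = 0) (d : E) :
    ⟪g, d⟫ = -⟪l, d⟫ - ⟪d, v⟫ := by
  have hg : g = -l - v := by
    rw [← sub_eq_zero, ← h]
    abel
  rw [hg, inner_sub_left, inner_neg_left, real_inner_comm v d]

lemma sum_inner_eq_neg_sub_of_add_add_eq_zero {ι : Type*} (s : Finset ι) {g l v : ι → E}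
    (h : ∀ i, g i + l i + v i = 0) (d : ι → E) :
    ∑ i ∈ s, ⟪g i, d i⟫ = -∑ i ∈ s, ⟪l i, d i⟫ - ∑ i ∈ s, ⟪d i, v i⟫ := by
  rw [← sum_neg_distrib, ← sum_sub_distrib]
  exact sum_congr rfl fun i _ ↦ inner_eq_neg_sub_of_add_add_eq_zero (h i) (d i)

end

theorem merit_descent_local_update_general {n N : ℕ}
    (g : Fin N → EuclideanSpace ℝ (Fin n))
    (B : Fin N → Matrix (Fin n) (Fin n) ℝ)
    (σ : Fin N → ℝ)
    (lam Δ : Fin N → EuclideanSpace ℝ (Fin n))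
    (hfoc : ∀ i, g i + lam i + Matrix.toEuclideanLin (B i) (Δ i) = 0)
    (hcond : ∑ i, (inner ℝ (lam i) (Δ i) : ℝ)
        + ∑ i, (inner ℝ (Δ i) (Matrix.toEuclideanLin (B i) (Δ i)) : ℝ)
        > ∑ i, σ i * l1norm (Δ i)) :
    ∑ i, (inner ℝ (g i) (Δ i) : ℝ) + ∑ i, σ i * l1norm (Δ i) < 0 := by
  have hpairing := sum_inner_eq_neg_sub_of_add_add_eq_zero univ hfoc Δ
  linarith

/-- Theorem 1: descent of the L1 merit function at the local primal-update step. -/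
theorem merit_descent_local_update {n N : ℕ}
    (F : Fin N → EuclideanSpace ℝ (Fin n) → ℝ)
    (y : EuclideanSpace ℝ (Fin n))
    (g : Fin N → EuclideanSpace ℝ (Fin n))
    (B : Fin N → Matrix (Fin n) (Fin n) ℝ)
    (σ : Fin N → ℝ)
    (lam Δ : Fin N → EuclideanSpace ℝ (Fin n))
    (hF : ∀ i, HasGradientAt (F i) (g i) y)
    (hBsymm : ∀ i, (B i).IsSymm)
    (hBpos : ∀ i, (B i).PosDef)
    (hσ : ∀ i, 0 ≤ σ i)
    (hfoc : ∀ i, g i + lam i + Matrix.toEuclideanLin (B i) (Δ i) = 0)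
    (hcond : ∑ i, (inner ℝ (lam i) (Δ i) : ℝ)
        + ∑ i, (inner ℝ (Δ i) (Matrix.toEuclideanLin (B i) (Δ i)) : ℝ)
        > ∑ i, σ i * l1norm (Δ i)) :
    ∑ i, (inner ℝ (g i) (Δ i) : ℝ) + ∑ i, σ i * l1norm (Δ i) < 0 :=
  merit_descent_local_update_general g B σ lam Δ hfoc hcond
end

section
/- Let F_i : ℝ^n → ℝ (i = 1,…,N) be differentiable at points x_i⁺ ∈ ℝ^n, let B_i be symmetric positive definite n×n real matrices, and let λ_i⁺, Δx̃_i ∈ ℝ^n satisfy the first-order optimality condition B_i Δx̃_i + λ_i⁺ + ∇F_i(x_i⁺) = 0 for every i. Suppose σ_i > ‖λ_i⁺‖_∞ for every i, and that Δx̃_i ≠ 0 for at least one i. Then Σ_{i=1}^N ⟪∇F_i(x_i⁺), Δx̃_i⟫ − Σ_{i=1}^N σ_i ‖Δx̃_i‖₁ < 0; that is, the one-sided directional derivative of the merit function Φ(x) = Σ_i F_i(x_i) + Σ_i σ_i ‖x_i − (x_i⁺ + Δx̃_i)‖₁ at x⁺ in the direction Δx̃ is strictly negative. -/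
/-- The ℓ∞ (sup) norm on ℝⁿ: `‖v‖∞ = maxⱼ |vⱼ|`. -/
noncomputable def linfnorm {n : ℕ} (v : EuclideanSpace ℝ (Fin n)) : ℝ :=
  ‖(WithLp.equiv 2 (Fin n → ℝ)) v‖

open scoped RealInnerProductSpace

section Norms

variable {n : ℕ}

lemma l1norm_nonneg (v : EuclideanSpace ℝ (Fin n)) : 0 ≤ l1norm v :=
  Finset.sum_nonneg fun j _ => abs_nonneg (v j)

lemma abs_le_linfnorm (v : EuclideanSpace ℝ (Fin n)) (j : Fin n) : |v j| ≤ linfnorm v :=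
  norm_le_pi_norm (WithLp.equiv 2 (Fin n → ℝ) v) j

lemma abs_inner_le_linfnorm_mul_l1norm (a b : EuclideanSpace ℝ (Fin n)) :
    |⟪a, b⟫| ≤ linfnorm a * l1norm b := by
  rw [PiLp.inner_apply, l1norm, Finset.mul_sum]
  refine (Finset.abs_sum_le_sum_abs _ _).trans (Finset.sum_le_sum fun j _ => ?_)
  rw [RCLike.inner_apply, conj_trivial, abs_mul, mul_comm]
  exact mul_le_mul_of_nonneg_right (abs_le_linfnorm a j) (abs_nonneg _)

lemma inner_sub_mul_l1norm_le_inner_add {g l v : EuclideanSpace ℝ (Fin n)} {σ : ℝ}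
    (hσ : linfnorm l ≤ σ) : ⟪g, v⟫ - σ * l1norm v ≤ ⟪g + l, v⟫ := by
  have hHolder : -⟪l, v⟫ ≤ σ * l1norm v :=
    calc -⟪l, v⟫ ≤ |⟪l, v⟫| := neg_le_abs _
      _ ≤ linfnorm l * l1norm v := abs_inner_le_linfnorm_mul_l1norm l v
      _ ≤ σ * l1norm v := mul_le_mul_of_nonneg_right hσ (l1norm_nonneg v)
  rw [inner_add_left]
  linarith

end Norms

section QuadraticForm

variable {n : ℕ} {B : Matrix (Fin n) (Fin n) ℝ}

lemma inner_toEuclideanLin_self_nonneg (hB : B.PosSemidef) (v : EuclideanSpace ℝ (Fin n)) :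
    0 ≤ ⟪Matrix.toEuclideanLin B v, v⟫ := by
  rw [EuclideanSpace.inner_eq_star_dotProduct]
  simpa [dotProduct_comm] using hB.dotProduct_mulVec_nonneg (WithLp.ofLp v)

lemma inner_toEuclideanLin_self_pos (hB : B.PosDef) {v : EuclideanSpace ℝ (Fin n)} (hv : v ≠ 0) :
    0 < ⟪Matrix.toEuclideanLin B v, v⟫ := by
  rw [EuclideanSpace.inner_eq_star_dotProduct]
  simpa [dotProduct_comm] using hB.dotProduct_mulVec_pos (x := WithLp.ofLp v) (by simpa using hv)

end QuadraticForm

theorem merit_descent_consensus_step_general {n N : ℕ}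
    (g : Fin N → EuclideanSpace ℝ (Fin n))
    (B : Fin N → Matrix (Fin n) (Fin n) ℝ)
    (σ : Fin N → ℝ)
    (lamp Δ : Fin N → EuclideanSpace ℝ (Fin n))
    (hBpos : ∀ i, (B i).PosDef)
    (hfoc : ∀ i, Matrix.toEuclideanLin (B i) (Δ i) + lamp i + g i = 0)
    (hσ : ∀ i, σ i > linfnorm (lamp i))
    (hΔ : ∃ i, Δ i ≠ 0) :
    ∑ i, (inner ℝ (g i) (Δ i) : ℝ) - ∑ i, σ i * l1norm (Δ i) < 0 := by
  obtain ⟨i₀, hi₀⟩ := hΔ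
  have hterm : ∀ i, ⟪g i, Δ i⟫ - σ i * l1norm (Δ i)
      ≤ -⟪Matrix.toEuclideanLin (B i) (Δ i), Δ i⟫ := by
    intro i
    have hgl : g i + lamp i = -Matrix.toEuclideanLin (B i) (Δ i) := by
      linear_combination (norm := module) hfoc i
    simpa [hgl, inner_neg_left] using inner_sub_mul_l1norm_le_inner_add (g := g i) (hσ i).le
  have hpos : 0 < ∑ i, ⟪Matrix.toEuclideanLin (B i) (Δ i), Δ i⟫ :=
    Finset.sum_pos' (fun i _ => inner_toEuclideanLin_self_nonneg (hBpos i).posSemidef (Δ i))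
      ⟨i₀, Finset.mem_univ i₀, inner_toEuclideanLin_self_pos (hBpos i₀) hi₀⟩
  rw [← Finset.sum_sub_distrib]
  calc ∑ i, (⟪g i, Δ i⟫ - σ i * l1norm (Δ i))
      ≤ ∑ i, -⟪Matrix.toEuclideanLin (B i) (Δ i), Δ i⟫ := Finset.sum_le_sum fun i _ => hterm i
    _ = -∑ i, ⟪Matrix.toEuclideanLin (B i) (Δ i), Δ i⟫ := Finset.sum_neg_distrib _
    _ < 0 := neg_neg_of_pos hpos

/-- Theorem 2: descent of the L1 merit function at the consensus (coupled QP) step. -/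
theorem merit_descent_consensus_step {n N : ℕ}
    (F : Fin N → EuclideanSpace ℝ (Fin n) → ℝ)
    (g xp : Fin N → EuclideanSpace ℝ (Fin n))
    (B : Fin N → Matrix (Fin n) (Fin n) ℝ)
    (σ : Fin N → ℝ)
    (lamp Δ : Fin N → EuclideanSpace ℝ (Fin n))
    (hF : ∀ i, HasGradientAt (F i) (g i) (xp i))
    (hBsymm : ∀ i, (B i).IsSymm)
    (hBpos : ∀ i, (B i).PosDef)
    (hfoc : ∀ i, Matrix.toEuclideanLin (B i) (Δ i) + lamp i + g i = 0)
    (hσ : ∀ i, σ i > linfnorm (lamp i))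
    (hΔ : ∃ i, Δ i ≠ 0) :
    ∑ i, (inner ℝ (g i) (Δ i) : ℝ) - ∑ i, σ i * l1norm (Δ i) < 0 :=
  merit_descent_consensus_step_general g B σ lamp Δ hBpos hfoc hσ hΔ
end

section
/- Let B_i (i = 1,…,N) be symmetric positive definite n×n real matrices and let F_i : ℝ^n → ℝ be convex and differentiable. Suppose: (a) the local updates x_i⁺ ∈ ℝ^n satisfy the first-order optimality condition ∇F_i(x_i⁺) + λ_i + B_i(x_i⁺ − y) = 0 for every i; (b) (y*, λ*) is a KKT point, i.e. ∇F_i(y*) + λ_i* = 0 for every i and Σ_{i=1}^N λ_i* = 0; (c) Σ_{i=1}^N λ_i = 0 and Σ_{i=1}^N λ_i⁺ = 0; and (d) the updates (y⁺, λ⁺) satisfy x_i⁺ = ½ B_i⁻¹(λ_i⁺ − λ_i) + ½ (y + y⁺) for every i. Then the Lyapunov function L(y, λ) = Σ_{i=1}^N ⟪y − y*, B_i (y − y*)⟫ + Σ_{i=1}^N ⟪λ_i − λ_i*, B_i⁻¹ (λ_i − λ_i*)⟫ is monotonically decreasing: L(y⁺, λ⁺) − L(y, λ) ≤ 0. -/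
/-!
Per agent, with `S = B⁻¹`, set `p = B (y⁺ - y*) + (λ⁺ - λ*)` and `q = B (y - y*) + (λ* - λ)`.
The optimality condition, the KKT condition and the update relation give
`∇F(x⁺) - ∇F(y*) = -½ (p - q)` and `x⁺ - y* = ½ S (p + q)`, so monotonicity of the gradient of
the convex `F` yields `‖p‖²_S ≤ ‖q‖²_S`. Expanding, `‖p‖²_S = ‖y⁺ - y*‖²_B + ‖λ⁺ - λ*‖²_S
+ 2 ⟪λ⁺ - λ*, y⁺ - y*⟫`, and likewise for `q`; the cross terms cancel in the sum over the agents
because the multipliers sum to zero, leaving `L(y⁺, λ⁺) ≤ L(y, λ)`.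
-/

open scoped RealInnerProductSpace

namespace ConvexOn

variable {E : Type*} [NormedAddCommGroup E] [InnerProductSpace ℝ E] [CompleteSpace E]
  {s : Set E} {f : E → ℝ} {a b : E}

theorem inner_gradient_sub_gradient_nonneg (hf : ConvexOn ℝ s f) (ha : a ∈ s) (hb : b ∈ s)
    (hfa : DifferentiableAt ℝ f a) (hfb : DifferentiableAt ℝ f b) :
    0 ≤ ⟪gradient f b - gradient f a, b - a⟫ := by
  have hg : ConvexOn ℝ (AffineMap.lineMap a b ⁻¹' s) (f ∘ AffineMap.lineMap a b) :=
    hf.comp_affineMap _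
  have hderiv : ∀ t : ℝ, DifferentiableAt ℝ f (AffineMap.lineMap a b t) →
      HasDerivAt (f ∘ AffineMap.lineMap a b) ⟪gradient f (AffineMap.lineMap a b t), b - a⟫ t :=
    fun t h => by
      rw [inner_gradient_left]
      exact h.hasFDerivAt.comp_hasDerivAt t AffineMap.hasDerivAt_lineMap
  have h0 : (0 : ℝ) ∈ AffineMap.lineMap a b ⁻¹' s := by simpa using ha
  have h1 : (1 : ℝ) ∈ AffineMap.lineMap a b ⁻¹' s := by simpa using hb
  have left := hg.le_slope_of_hasDerivAt h0 h1 one_pos (hderiv 0 (by simpa using hfa))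
  have right := hg.slope_le_of_hasDerivAt h0 h1 one_pos (hderiv 1 (by simpa using hfb))
  simp only [AffineMap.lineMap_apply_zero, AffineMap.lineMap_apply_one] at left right
  rw [inner_sub_left]
  linarith

end ConvexOn

namespace LinearMap.IsSymmetric

variable {E : Type*} [NormedAddCommGroup E] [InnerProductSpace ℝ E] {S T : E →ₗ[ℝ] E}

theorem inner_sub_map_add (hS : S.IsSymmetric) (p q : E) :
    ⟪p - q, S (p + q)⟫ = ⟪p, S p⟫ - ⟪q, S q⟫ := by
  simp only [map_add, inner_add_right, inner_sub_left, ← hS q p, real_inner_comm p (S q)]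
  ring

theorem inner_map_add_map_add (hS : S.IsSymmetric) (hST : ∀ v, S (T v) = v) (e a : E) :
    ⟪T e + a, S (T e + a)⟫ = ⟪e, T e⟫ + 2 * ⟪a, e⟫ + ⟪a, S a⟫ := by
  simp only [map_add, inner_add_left, inner_add_right, ← hS (T e), hST, real_inner_comm e]
  ring

end LinearMap.IsSymmetric

namespace Matrix

theorem toEuclideanLin_apply_toEuclideanLin_of_mul_eq_one {𝕜 n : Type*} [RCLike 𝕜]
    [Fintype n] [DecidableEq n] {A C : Matrix n n 𝕜} (h : A * C = 1) (v : EuclideanSpace 𝕜 n) :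
    A.toEuclideanLin (C.toEuclideanLin v) = v := by
  change WithLp.toLp 2 (A *ᵥ C *ᵥ v.ofLp) = v
  rw [mulVec_mulVec, h, one_mulVec, WithLp.toLp_ofLp]

end Matrix

section

variable {E : Type*} [NormedAddCommGroup E] [InnerProductSpace ℝ E]

theorem inner_map_add_le_of_caladin_update [CompleteSpace E] {s : Set E} {f : E → ℝ}
    {S T : E →ₗ[ℝ] E} {x y yp ystar lam lamp lamstar : E}
    (hf : ConvexOn ℝ s f) (hxs : x ∈ s) (hys : ystar ∈ s)
    (hfx : DifferentiableAt ℝ f x) (hfy : DifferentiableAt ℝ f ystar)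
    (hS : S.IsSymmetric) (hST : ∀ v, S (T v) = v) (hTS : ∀ v, T (S v) = v)
    (hopt : gradient f x + lam + T (x - y) = 0) (hkkt : gradient f ystar + lamstar = 0)
    (hx : x = (1/2 : ℝ) • S (lamp - lam) + (1/2 : ℝ) • (y + yp)) :
    ⟪T (yp - ystar) + (lamp - lamstar), S (T (yp - ystar) + (lamp - lamstar))⟫
      ≤ ⟪T (y - ystar) + (lamstar - lam), S (T (y - ystar) + (lamstar - lam))⟫ := by
  set p := T (yp - ystar) + (lamp - lamstar)
  set q := T (y - ystar) + (lamstar - lam)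
  have hTx : T x = (1/2 : ℝ) • (lamp - lam) + (1/2 : ℝ) • (T y + T yp) := by
    rw [hx, map_add, map_smul, map_smul, hTS, map_add]
  have hgrad : gradient f x - gradient f ystar = -(1/2 : ℝ) • (p - q) := by
    simp only [p, q, map_sub] at hopt ⊢
    linear_combination (norm := module) hopt - hkkt - hTx
  have hdisp : x - ystar = (1/2 : ℝ) • S (p + q) := by
    simp only [p, q, hx, map_add, map_sub, hST]
    module
  have hmono := hf.inner_gradient_sub_gradient_nonneg hys hxs hfy hfx
  rw [hgrad, hdisp, real_inner_smul_left, real_inner_smul_right, hS.inner_sub_map_add] at hmono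
  linarith

theorem sum_inner_map_add_of_sum_eq_zero {ι : Type*} [Fintype ι] {S T : ι → E →ₗ[ℝ] E}
    (hS : ∀ i, (S i).IsSymmetric) (hST : ∀ i v, S i (T i v) = v) (e : E) (a : ι → E)
    (ha : ∑ i, a i = 0) :
    ∑ i, ⟪T i e + a i, S i (T i e + a i)⟫ = ∑ i, ⟪e, T i e⟫ + ∑ i, ⟪a i, S i (a i)⟫ := by
  have hcross : ∑ i, ⟪a i, e⟫ = 0 := by rw [← sum_inner, ha, inner_zero_left]
  simp only [(hS _).inner_map_add_map_add (hST _), Finset.sum_add_distrib, ← Finset.mul_sum,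
    hcross, mul_zero, add_zero]

end

theorem lyapunov_decrease_general {n N : ℕ}
    (B : Fin N → Matrix (Fin n) (Fin n) ℝ)
    (hBpos : ∀ i, (B i).PosDef)
    (F : Fin N → EuclideanSpace ℝ (Fin n) → ℝ)
    (hFconv : ∀ i, ConvexOn ℝ Set.univ (F i))
    (hFdiff : ∀ i, Differentiable ℝ (F i))
    (xp : Fin N → EuclideanSpace ℝ (Fin n))
    (y yp ystar : EuclideanSpace ℝ (Fin n))
    (lam lamp lamstar : Fin N → EuclideanSpace ℝ (Fin n))
    -- (a) first-order optimality condition of the local updates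
    (ha : ∀ i, gradient (F i) (xp i) + lam i + Matrix.toEuclideanLin (B i) (xp i - y) = 0)
    -- (b) (y*, λ*) is a KKT point
    (hb1 : ∀ i, gradient (F i) ystar + lamstar i = 0)
    (hb2 : ∑ i, lamstar i = 0)
    -- (c) dual feasibility of the multiplier iterates
    (hc1 : ∑ i, lam i = 0)
    (hc2 : ∑ i, lamp i = 0)
    -- (d) the C-ALADIN primal/dual update relation
    (hd : ∀ i, xp i = (1/2 : ℝ) • Matrix.toEuclideanLin (B i)⁻¹ (lamp i - lam i)
        + (1/2 : ℝ) • (y + yp))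
    (L : EuclideanSpace ℝ (Fin n) → (Fin N → EuclideanSpace ℝ (Fin n)) → ℝ)
    (hL : ∀ w μ, L w μ = ∑ i, (inner ℝ (w - ystar) (Matrix.toEuclideanLin (B i) (w - ystar)) : ℝ)
        + ∑ i, (inner ℝ (μ i - lamstar i) (Matrix.toEuclideanLin (B i)⁻¹ (μ i - lamstar i)) : ℝ)) :
    L yp lamp - L y lam ≤ 0 := by
  have hdet i : IsUnit (B i).det := (Matrix.isUnit_iff_isUnit_det _).mp (hBpos i).isUnit
  have hS i : (B i)⁻¹.toEuclideanLin.IsSymmetric :=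
    Matrix.isSymmetric_toEuclideanLin_iff.mpr (hBpos i).inv.isHermitian
  have hST i := Matrix.toEuclideanLin_apply_toEuclideanLin_of_mul_eq_one
    (Matrix.nonsing_inv_mul _ (hdet i))
  have hTS i := Matrix.toEuclideanLin_apply_toEuclideanLin_of_mul_eq_one
    (Matrix.mul_nonsing_inv _ (hdet i))
  have hstep i := inner_map_add_le_of_caladin_update (hFconv i) (Set.mem_univ _)
    (Set.mem_univ _) (hFdiff i _) (hFdiff i _) (hS i) (hST i) (hTS i) (ha i) (hb1 i) (hd i)
  have hnew := sum_inner_map_add_of_sum_eq_zero hS hST (yp - ystar) (fun i => lamp i - lamstar i)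
    (by rw [Finset.sum_sub_distrib, hc2, hb2, sub_zero])
  have hold := sum_inner_map_add_of_sum_eq_zero hS hST (y - ystar) (fun i => lamstar i - lam i)
    (by rw [Finset.sum_sub_distrib, hc1, hb2, sub_zero])
  have hflip i : ⟪lamstar i - lam i, (B i)⁻¹.toEuclideanLin (lamstar i - lam i)⟫
      = ⟪lam i - lamstar i, (B i)⁻¹.toEuclideanLin (lam i - lamstar i)⟫ := by
    rw [← neg_sub, map_neg, inner_neg_neg]
  simp only [hflip] at hold
  rw [hL, hL, ← hnew, ← hold, sub_nonpos]
  exact Finset.sum_le_sum fun i _ => hstep i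

/-- Theorem 3: monotone decrease of the Lyapunov function
`L(y, λ) = ∑ᵢ ‖y − y*‖²_{Bᵢ} + ∑ᵢ ‖λᵢ − λᵢ*‖²_{Bᵢ⁻¹}`
along the lower level of CALADIN-Prox. -/
theorem lyapunov_decrease {n N : ℕ}
    (B : Fin N → Matrix (Fin n) (Fin n) ℝ)
    (hBsymm : ∀ i, (B i).IsSymm)
    (hBpos : ∀ i, (B i).PosDef)
    (F : Fin N → EuclideanSpace ℝ (Fin n) → ℝ)
    (hFconv : ∀ i, ConvexOn ℝ Set.univ (F i))
    (hFdiff : ∀ i, Differentiable ℝ (F i))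
    (xp : Fin N → EuclideanSpace ℝ (Fin n))
    (y yp ystar : EuclideanSpace ℝ (Fin n))
    (lam lamp lamstar : Fin N → EuclideanSpace ℝ (Fin n))
    -- (a) first-order optimality condition of the local updates
    (ha : ∀ i, gradient (F i) (xp i) + lam i + Matrix.toEuclideanLin (B i) (xp i - y) = 0)
    -- (b) (y*, λ*) is a KKT point
    (hb1 : ∀ i, gradient (F i) ystar + lamstar i = 0)
    (hb2 : ∑ i, lamstar i = 0)
    -- (c) dual feasibility of the multiplier iterates
    (hc1 : ∑ i, lam i = 0)
    (hc2 : ∑ i, lamp i = 0)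
    -- (d) the C-ALADIN primal/dual update relation
    (hd : ∀ i, xp i = (1/2 : ℝ) • Matrix.toEuclideanLin (B i)⁻¹ (lamp i - lam i)
        + (1/2 : ℝ) • (y + yp))
    (L : EuclideanSpace ℝ (Fin n) → (Fin N → EuclideanSpace ℝ (Fin n)) → ℝ)
    (hL : ∀ w μ, L w μ = ∑ i, (inner ℝ (w - ystar) (Matrix.toEuclideanLin (B i) (w - ystar)) : ℝ)
        + ∑ i, (inner ℝ (μ i - lamstar i) (Matrix.toEuclideanLin (B i)⁻¹ (μ i - lamstar i)) : ℝ)) :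
    L yp lamp - L y lam ≤ 0 :=
  lyapunov_decrease_general B hBpos F hFconv hFdiff xp y yp ystar lam lamp lamstar ha hb1 hb2 hc1
    hc2 hd L hL
end

section
/- Let B_i (i = 1,…,N) be symmetric positive definite (hence invertible) n×n real matrices, and let y, y⁺, y* ∈ ℝ^n and λ_i, λ_i⁺, λ_i*, x_i⁺ ∈ ℝ^n satisfy: Σ_{i=1}^N λ_i = 0, Σ_{i=1}^N λ_i⁺ = 0, Σ_{i=1}^N λ_i* = 0, and x_i⁺ = ½ B_i⁻¹(λ_i⁺ − λ_i) + ½ (y + y⁺) for every i. Then 4 Σ_{i=1}^N ⟪λ_i − λ_i* + B_i(x_i⁺ − y), x_i⁺ − y*⟫ = (Σ_{i=1}^N ⟪y⁺ − y*, B_i (y⁺ − y*)⟫ + Σ_{i=1}^N ⟪λ_i⁺ − λ_i*, B_i⁻¹ (λ_i⁺ − λ_i*)⟫) − (Σ_{i=1}^N ⟪y − y*, B_i (y − y*)⟫ + Σ_{i=1}^N ⟪λ_i − λ_i*, B_i⁻¹ (λ_i − λ_i*)⟫). -/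
/-!
Substituting `x_i⁺ = ½ B_i⁻¹(λ_i⁺ − λ_i) + ½ (y + y⁺)` and expanding, each agent's cross term
`4 ⟪λ_i − λ_i* + B_i(x_i⁺ − y), x_i⁺ − y*⟫` equals its share of the Lyapunov difference plus two
terms that are linear in the multipliers, `2 ⟪λ_i⁺ − λ_i, y⁺ − y*⟫` and
`2 ⟪λ_i − λ_i*, (y⁺ − y*) + (y − y*)⟫`. Summing over the agents, the linear terms vanish
because the multipliers sum to zero.
-/

open scoped RealInnerProductSpace

section InnerProductSpace

variable {E : Type*} [NormedAddCommGroup E] [InnerProductSpace ℝ E]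

theorem LinearMap.IsSymmetric.inner_map_comm {f : E →ₗ[ℝ] E} (hf : f.IsSymmetric) (x y : E) :
    ⟪x, f y⟫ = ⟪y, f x⟫ := by
  rw [← hf, real_inner_comm]

theorem four_mul_inner_cross_term_eq {f g : E →ₗ[ℝ] E} (hf : f.IsSymmetric) (hg : g.IsSymmetric)
    (hfg : ∀ w, f (g w) = w) (y yp ystar lam lamp lamstar x : E)
    (hx : x = (1/2 : ℝ) • g (lamp - lam) + (1/2 : ℝ) • (y + yp)) :
    4 * ⟪lam - lamstar + f (x - y), x - ystar⟫
      = (⟪yp - ystar, f (yp - ystar)⟫ + ⟪lamp - lamstar, g (lamp - lamstar)⟫)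
        - (⟪y - ystar, f (y - ystar)⟫ + ⟪lam - lamstar, g (lam - lamstar)⟫)
        + 2 * ⟪lamp - lam, yp - ystar⟫ + 2 * ⟪lam - lamstar, (yp - ystar) + (y - ystar)⟫ := by
  subst hx
  simp only [inner_add_left, inner_add_right, inner_sub_left, inner_sub_right,
    real_inner_smul_left, real_inner_smul_right, map_add, map_sub, map_smul, hf _, hfg]
  simp only [hg.inner_map_comm lamp lam, hg.inner_map_comm lamp lamstar,
    hg.inner_map_comm lam lamstar, hf.inner_map_comm yp y, hf.inner_map_comm ystar y,
    hf.inner_map_comm ystar yp, real_inner_comm lam y, real_inner_comm lam yp,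
    real_inner_comm lamp y, real_inner_comm lamp yp]
  ring

theorem sum_inner_eq_zero_of_sum_eq_zero {ι : Type*} {s : Finset ι} {a : ι → E}
    (ha : ∑ i ∈ s, a i = 0) (c : E) : ∑ i ∈ s, ⟪a i, c⟫ = 0 := by
  rw [← sum_inner, ha, inner_zero_left]

end InnerProductSpace

theorem Matrix.toEuclideanLin_apply_toEuclideanLin_inv {𝕜 n : Type*} [RCLike 𝕜] [Fintype n]
    [DecidableEq n] {A : Matrix n n 𝕜} (hA : IsUnit A) (w : EuclideanSpace 𝕜 n) :
    toEuclideanLin A (toEuclideanLin A⁻¹ w) = w := by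
  simp [toLpLin_apply, mulVec_mulVec, mul_nonsing_inv _ (A.isUnit_iff_isUnit_det.mp hA)]

theorem lyapunov_identity_general {n N : ℕ}
    (B : Fin N → Matrix (Fin n) (Fin n) ℝ)
    (hBpos : ∀ i, (B i).PosDef)
    (y yp ystar : EuclideanSpace ℝ (Fin n))
    (lam lamp lamstar xp : Fin N → EuclideanSpace ℝ (Fin n))
    (h1 : ∑ i, lam i = 0)
    (h2 : ∑ i, lamp i = 0)
    (h3 : ∑ i, lamstar i = 0)
    (h4 : ∀ i, xp i = (1/2 : ℝ) • Matrix.toEuclideanLin (B i)⁻¹ (lamp i - lam i)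
        + (1/2 : ℝ) • (y + yp)) :
    4 * ∑ i, (inner ℝ (lam i - lamstar i + Matrix.toEuclideanLin (B i) (xp i - y)) (xp i - ystar) : ℝ)
      = (∑ i, (inner ℝ (yp - ystar) (Matrix.toEuclideanLin (B i) (yp - ystar)) : ℝ)
          + ∑ i, (inner ℝ (lamp i - lamstar i) (Matrix.toEuclideanLin (B i)⁻¹ (lamp i - lamstar i)) : ℝ))
        - (∑ i, (inner ℝ (y - ystar) (Matrix.toEuclideanLin (B i) (y - ystar)) : ℝ)
          + ∑ i, (inner ℝ (lam i - lamstar i) (Matrix.toEuclideanLin (B i)⁻¹ (lam i - lamstar i)) : ℝ)) := by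
  have hcross i := four_mul_inner_cross_term_eq
    (Matrix.isSymmetric_toEuclideanLin_iff.mpr (hBpos i).isHermitian)
    (Matrix.isSymmetric_toEuclideanLin_iff.mpr (hBpos i).isHermitian.inv)
    (Matrix.toEuclideanLin_apply_toEuclideanLin_inv (hBpos i).isUnit)
    y yp ystar (lam i) (lamp i) (lamstar i) (xp i) (h4 i)
  have hstep : ∑ i, ⟪lamp i - lam i, yp - ystar⟫ = 0 :=
    sum_inner_eq_zero_of_sum_eq_zero (by rw [Finset.sum_sub_distrib, h1, h2, sub_zero]) _
  have hdev : ∑ i, ⟪lam i - lamstar i, (yp - ystar) + (y - ystar)⟫ = 0 :=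
    sum_inner_eq_zero_of_sum_eq_zero (by rw [Finset.sum_sub_distrib, h1, h3, sub_zero]) _
  rw [Finset.mul_sum, Finset.sum_congr rfl fun i _ => hcross i]
  simp only [Finset.sum_add_distrib, Finset.sum_sub_distrib, ← Finset.mul_sum, hstep, hdev]
  ring

/-- The algebraic identity of Appendix E: the Lyapunov difference across one
lower-level iteration equals four times the summed cross term. -/
theorem lyapunov_identity {n N : ℕ}
    (B : Fin N → Matrix (Fin n) (Fin n) ℝ)
    (hBsymm : ∀ i, (B i).IsSymm)
    (hBpos : ∀ i, (B i).PosDef)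
    (y yp ystar : EuclideanSpace ℝ (Fin n))
    (lam lamp lamstar xp : Fin N → EuclideanSpace ℝ (Fin n))
    (h1 : ∑ i, lam i = 0)
    (h2 : ∑ i, lamp i = 0)
    (h3 : ∑ i, lamstar i = 0)
    (h4 : ∀ i, xp i = (1/2 : ℝ) • Matrix.toEuclideanLin (B i)⁻¹ (lamp i - lam i)
        + (1/2 : ℝ) • (y + yp)) :
    4 * ∑ i, (inner ℝ (lam i - lamstar i + Matrix.toEuclideanLin (B i) (xp i - y)) (xp i - ystar) : ℝ)
      = (∑ i, (inner ℝ (yp - ystar) (Matrix.toEuclideanLin (B i) (yp - ystar)) : ℝ)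
          + ∑ i, (inner ℝ (lamp i - lamstar i) (Matrix.toEuclideanLin (B i)⁻¹ (lamp i - lamstar i)) : ℝ))
        - (∑ i, (inner ℝ (y - ystar) (Matrix.toEuclideanLin (B i) (y - ystar)) : ℝ)
          + ∑ i, (inner ℝ (lam i - lamstar i) (Matrix.toEuclideanLin (B i)⁻¹ (lam i - lamstar i)) : ℝ)) :=
  lyapunov_identity_general B hBpos y yp ystar lam lamp lamstar xp h1 h2 h3 h4
end
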